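/- arXiv:2112.10410 — 2 statements merged into one kernel-verified Lean document; each statement's English description precedes it below -/
import Mathlib

section
/- Let k ≥ 3 and m ≥ 2 be integers with m odd and not divisible by 3, let N = k·m, and let l be an integer with l² ≡ 1 (mod k). If m ≡ −l (mod k), then the (lm+2 mod N)-monomial minimal solution of (E_N) has size 6m; if m ≡ l (mod k), then the (lm−2 mod N)-monomial minimal solution of (E_N) has size 6m. -/
/-!
If `m ≡ -l` and `l² ≡ 1 (mod k)` then `k ∣ lm + 1`; in particular `k` and `m` are coprime, so a
matrix over `ZMod (km)` is determined by its reductions mod `k` and mod `m`. Modulo `m` the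
entry `y = lm + 2` becomes `2`, and `mat 2` is unipotent: `mat 2 ^ n = [[n+1, -n], [n, 1-n]]`,
which is never `-Id` (as `m > 2`) and is `Id` exactly when `m ∣ n`. Modulo `k` the entry becomes
`1`, and `mat 1` has order `6`. Hence `mat y ^ n = ±Id` iff `6 ∣ n` and `m ∣ n`, i.e. iff
`6m ∣ n`. The second case follows from the first because `lm - 2 = -((-l)m + 2)` and
`mat (-x) = -(D * mat x * D)` with `D = diag(1, -1)`, so `x` and `-x` have the same solutions.
-/

namespace Monomial

/-- The elementary matrix `[[a, -1], [1, 0]]` over `ZMod N`. -/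
def mat {N : ℕ} (a : ZMod N) : Matrix (Fin 2) (Fin 2) (ZMod N) := !![a, -1; 1, 0]

/-- `M [a₁, …, aₙ] = mat aₙ * ⋯ * mat a₁`. -/
def M {N : ℕ} (l : List (ZMod N)) : Matrix (Fin 2) (Fin 2) (ZMod N) :=
  (l.reverse.map mat).prod

/-- A tuple is a solution of (E_N) if the associated matrix is `±Id`. -/
def IsSolution {N : ℕ} (l : List (ZMod N)) : Prop := M l = 1 ∨ M l = -1

/-- The sum `(a₁,…,aₙ) ⊕ (b₁,…,bₘ) = (a₁+bₘ, a₂,…,aₙ₋₁, aₙ+b₁, b₂,…,bₘ₋₁)`. -/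
def osum {N : ℕ} (u v : List (ZMod N)) : List (ZMod N) :=
  (u.headI + v.getLastD 0) ::
    ((u.drop 1).dropLast ++ (u.getLastD 0 + v.headI) :: (v.drop 1).dropLast)

/-- Equivalence: `v` is a cyclic permutation of `u` or of the reversal of `u`. -/
def CyclicEquiv {N : ℕ} (u v : List (ZMod N)) : Prop :=
  (∃ i, v = u.rotate i) ∨ (∃ i, v = u.reverse.rotate i)

/-- A tuple is reducible if, up to equivalence, it is a sum of an `m`-tuple (`m ≥ 3`)
with a solution of size `l ≥ 3`. -/
def Reducible {N : ℕ} (c : List (ZMod N)) : Prop :=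
  ∃ a b : List (ZMod N), 3 ≤ a.length ∧ 3 ≤ b.length ∧ IsSolution b ∧
    CyclicEquiv c (osum a b)

/-- An irreducible solution: a solution which is not reducible (and `(0,0)` is
not considered irreducible). -/
def IrreducibleSol {N : ℕ} (c : List (ZMod N)) : Prop :=
  IsSolution c ∧ ¬ Reducible c ∧ c ≠ [0, 0]

/-- The size of the `k`-monomial minimal solution of (E_N): the least `n > 0` such
that the constant `n`-tuple `(k, …, k)` is a solution. -/
noncomputable def monomialMinimalSize (N : ℕ) (k : ZMod N) : ℕ :=
  sInf {n | 0 < n ∧ IsSolution (List.replicate n k)}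

/-- `N` is monomially irreducible if, for every `k ≠ 0`, the `k`-monomial minimal
solution of (E_N) is irreducible. -/
def MonomiallyIrreducible (N : ℕ) : Prop :=
  ∀ k : ZMod N, k ≠ 0 → IrreducibleSol (List.replicate (monomialMinimalSize N k) k)

/-- The continuant `Kₙ(x, …, x)` at a constant tuple: `K₀ = 1`, `K₁ = x`,
`Kₙ₊₂ = x * Kₙ₊₁ - Kₙ`. -/
def K {N : ℕ} (x : ZMod N) : ℕ → ZMod N
  | 0 => 1
  | 1 => x
  | n + 2 => x * K x (n + 1) - K x n

section Continuant

variable {N : ℕ}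

lemma M_replicate (n : ℕ) (x : ZMod N) : M (List.replicate n x) = mat x ^ n := by
  rw [M, List.reverse_replicate, List.map_replicate, List.prod_replicate]

lemma isSolution_replicate_iff (n : ℕ) (x : ZMod N) :
    IsSolution (List.replicate n x) ↔ mat x ^ n = 1 ∨ mat x ^ n = -1 := by
  rw [IsSolution, M_replicate]

lemma monomialMinimalSize_eq_of_forall_iff {x : ZMod N} {d : ℕ} (hd : 0 < d)
    (h : ∀ n, IsSolution (List.replicate n x) ↔ d ∣ n) : monomialMinimalSize N x = d := by
  have hmem : d ∈ {n | 0 < n ∧ IsSolution (List.replicate n x)} := ⟨hd, (h d).2 dvd_rfl⟩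
  refine le_antisymm (Nat.sInf_le hmem) (le_csInf ⟨d, hmem⟩ ?_)
  rintro n ⟨hn, hsol⟩
  exact Nat.le_of_dvd hn ((h n).1 hsol)

lemma mat_map {N' : ℕ} (f : ZMod N →+* ZMod N') (x : ZMod N) : (mat x).map f = mat (f x) := by
  ext i j
  fin_cases i <;> fin_cases j <;> simp [mat]

lemma mat_two_pow (n : ℕ) : mat (2 : ZMod N) ^ n = !![(n : ZMod N) + 1, -n; n, 1 - n] := by
  induction n with
  | zero => simp [Matrix.one_fin_two]
  | succ n ih =>
    rw [pow_succ, ih, mat, Matrix.mul_fin_two]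
    ext i j
    fin_cases i <;> fin_cases j <;> simp <;> ring

lemma mat_two_pow_eq_one_iff (n : ℕ) : mat (2 : ZMod N) ^ n = 1 ↔ N ∣ n := by
  rw [← ZMod.natCast_eq_zero_iff, mat_two_pow, Matrix.one_fin_two]
  constructor
  · intro h
    simpa using congr_fun₂ h 1 0
  · intro h
    simp [h]

lemma mat_two_pow_ne_neg_one (hN : 2 < N) (n : ℕ) : mat (2 : ZMod N) ^ n ≠ -1 := by
  intro h
  rw [mat_two_pow] at h
  have h10 : (n : ZMod N) = 0 := by simpa using congr_fun₂ h 1 0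
  have h00 : (n : ZMod N) + 1 = -1 := by simpa using congr_fun₂ h 0 0
  have : Fact (2 < N) := ⟨hN⟩
  exact ZMod.neg_one_ne_one (by linear_combination h10 - h00)

lemma mat_one_pow_three : mat (1 : ZMod N) ^ 3 = -1 := by
  ext i j
  fin_cases i <;> fin_cases j <;> simp [mat, pow_succ]

lemma mat_one_pow_eq_one_iff (hN : 2 < N) (n : ℕ) : mat (1 : ZMod N) ^ n = 1 ↔ 6 ∣ n := by
  have h6 : mat (1 : ZMod N) ^ 6 = 1 := by
    rw [show 6 = 3 * 2 from rfl, pow_mul, mat_one_pow_three, neg_one_sq]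
  have hpow : mat (1 : ZMod N) ^ n = mat 1 ^ (n % 6) := by
    conv_lhs => rw [← Nat.div_add_mod n 6, pow_add, pow_mul, h6, one_pow, one_mul]
  rw [hpow, Nat.dvd_iff_mod_eq_zero]
  have : Fact (1 < N) := ⟨by omega⟩
  have : Fact (2 < N) := ⟨hN⟩
  have hr : n % 6 < 6 := Nat.mod_lt n (by norm_num)
  interval_cases n % 6 <;>
    simp [mat, pow_succ, ← Matrix.ext_iff, Fin.forall_fin_two, ZMod.neg_one_ne_one]

lemma mat_neg_pow (x : ZMod N) (n : ℕ) :
    mat (-x) ^ n = (-1) ^ n * (!![1, 0; 0, -1] * mat x ^ n * !![1, 0; 0, -1]) := by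
  have hD : (!![1, 0; 0, -1] : Matrix (Fin 2) (Fin 2) (ZMod N)) * !![1, 0; 0, -1] = 1 := by
    simp [Matrix.one_fin_two]
  have hneg : mat (-x) = -(!![1, 0; 0, -1] * mat x * !![1, 0; 0, -1]) := by
    ext i j
    fin_cases i <;> fin_cases j <;> simp [mat]
  rw [hneg, neg_pow]
  exact congrArg _ (Units.conj_pow ⟨_, _, hD, hD⟩ (mat x) n)

lemma isSolution_replicate_neg_iff (n : ℕ) (x : ZMod N) :
    IsSolution (List.replicate n (-x)) ↔ IsSolution (List.replicate n x) := by
  rw [isSolution_replicate_iff, isSolution_replicate_iff, mat_neg_pow]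
  set D : Matrix (Fin 2) (Fin 2) (ZMod N) := !![1, 0; 0, -1]
  have hD : D * D = 1 := by simp [D, Matrix.one_fin_two]
  have hconj : ∀ B E, D * E * D = E → (D * B * D = E ↔ B = E) := fun B E hE =>
    ⟨fun h => by rw [← hE, ← h, ← mul_assoc, ← mul_assoc, hD, one_mul, mul_assoc, hD, mul_one],
      fun h => h ▸ hE⟩
  have h1 : D * 1 * D = 1 := by rw [mul_one, hD]
  have hm1 : D * (-1) * D = -1 := by rw [mul_neg_one, neg_mul, hD]
  rw [← hconj (mat x ^ n) 1 h1, ← hconj (mat x ^ n) (-1) hm1]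
  rcases neg_one_pow_eq_or (Matrix (Fin 2) (Fin 2) (ZMod N)) n with h | h <;> rw [h]
  · rw [one_mul]
  · rw [neg_one_mul, neg_eq_iff_eq_neg, neg_eq_iff_eq_neg, neg_neg, or_comm]

lemma monomialMinimalSize_neg (x : ZMod N) :
    monomialMinimalSize N (-x) = monomialMinimalSize N x := by
  simp only [monomialMinimalSize, isSolution_replicate_neg_iff]

end Continuant

section CRT

variable {k m : ℕ}

lemma eq_of_castHom_eq (hkm : k.Coprime m) {a b : ZMod (k * m)}
    (hk : ZMod.castHom (dvd_mul_right k m) (ZMod k) a = ZMod.castHom (dvd_mul_right k m) _ b)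
    (hm : ZMod.castHom (dvd_mul_left m k) (ZMod m) a = ZMod.castHom (dvd_mul_left m k) _ b) :
    a = b := by
  obtain ⟨a, rfl⟩ := ZMod.intCast_surjective a
  obtain ⟨b, rfl⟩ := ZMod.intCast_surjective b
  simp only [map_intCast, ZMod.intCast_eq_intCast_iff_dvd_sub] at hk hm ⊢
  exact_mod_cast (Nat.isCoprime_iff_coprime.2 hkm).mul_dvd hk hm

lemma eq_one_of_map_castHom_eq_one (hkm : k.Coprime m)
    {A : Matrix (Fin 2) (Fin 2) (ZMod (k * m))}
    (hk : A.map (ZMod.castHom (dvd_mul_right k m) (ZMod k)) = 1)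
    (hm : A.map (ZMod.castHom (dvd_mul_left m k) (ZMod m)) = 1) : A = 1 := by
  rw [← Matrix.map_one _ (map_zero (ZMod.castHom (dvd_mul_right k m) (ZMod k))) (map_one _)]
    at hk
  rw [← Matrix.map_one _ (map_zero (ZMod.castHom (dvd_mul_left m k) (ZMod m))) (map_one _)]
    at hm
  ext i j
  exact eq_of_castHom_eq hkm (congr_fun₂ hk i j) (congr_fun₂ hm i j)

lemma isSolution_replicate_iff_of_castHom (hkm : k.Coprime m) (hk : 2 < k) (hm : 2 < m)
    {y : ZMod (k * m)} (hyk : ZMod.castHom (dvd_mul_right k m) (ZMod k) y = 1)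
    (hym : ZMod.castHom (dvd_mul_left m k) (ZMod m) y = 2) (n : ℕ) :
    IsSolution (List.replicate n y) ↔ 6 ∣ n ∧ m ∣ n := by
  have hmapk : (mat y ^ n).map (ZMod.castHom (dvd_mul_right k m) (ZMod k)) = mat 1 ^ n := by
    rw [Matrix.map_pow, mat_map, hyk]
  have hmapm : (mat y ^ n).map (ZMod.castHom (dvd_mul_left m k) (ZMod m)) = mat 2 ^ n := by
    rw [Matrix.map_pow, mat_map, hym]
  rw [isSolution_replicate_iff, ← mat_one_pow_eq_one_iff hk, ← mat_two_pow_eq_one_iff, ← hmapk,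
    ← hmapm]
  constructor
  · rintro (h | h)
    · simp [h]
    · refine absurd ?_ (mat_two_pow_ne_neg_one hm n)
      rw [← hmapm, h, ← RingHom.mapMatrix_apply, map_neg, map_one]
  · rintro ⟨h6, hmn⟩
    exact Or.inl (eq_one_of_map_castHom_eq_one hkm h6 hmn)

end CRT

lemma dvd_mul_add_one_of_modEq {n l m : ℤ} (hl : l ^ 2 ≡ 1 [ZMOD n]) (hm : m ≡ -l [ZMOD n]) :
    n ∣ l * m + 1 := by
  have h := (hm.mul_left l).add hl.symm
  rw [show l * -l + l ^ 2 = 0 by ring] at h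
  exact Int.modEq_zero_iff_dvd.1 h

theorem monomialMinimalSize_mul_add_two {k m : ℕ} (hk : 2 < k) (hm : 2 < m)
    (h6m : Nat.Coprime 6 m) {l : ℤ} (hl : (k : ℤ) ∣ l * m + 1) :
    monomialMinimalSize (k * m) ((l * m + 2 : ℤ) : ZMod (k * m)) = 6 * m := by
  have hkm : k.Coprime m := by
    obtain ⟨c, hc⟩ := hl
    exact Nat.isCoprime_iff_coprime.1 ⟨c, -l, by linear_combination -hc⟩
  refine monomialMinimalSize_eq_of_forall_iff (by omega) fun n => ?_
  rw [isSolution_replicate_iff_of_castHom hkm hk hm]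
  · exact ⟨fun ⟨h6, hmn⟩ => h6m.mul_dvd_of_dvd_of_dvd h6 hmn,
      fun h => ⟨dvd_of_mul_right_dvd h, dvd_of_mul_left_dvd h⟩⟩
  · rw [map_intCast, ← Int.cast_one, ZMod.intCast_eq_intCast_iff_dvd_sub,
      show (1 : ℤ) - (l * m + 2) = -(l * m + 1) by ring]
    exact hl.neg_right
  · rw [map_intCast]
    simp

theorem stmt15 (k m : ℕ) (hk : 3 ≤ k) (hm : 2 ≤ m) (hmo : Odd m)
    (hm3 : ¬ (3 ∣ m)) (l : ℤ) (h2 : l ^ 2 ≡ 1 [ZMOD (k : ℤ)]) :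
    ((m : ℤ) ≡ -l [ZMOD (k : ℤ)] →
      monomialMinimalSize (k * m) ((l * m + 2 : ℤ) : ZMod (k * m)) = 6 * m) ∧
    ((m : ℤ) ≡ l [ZMOD (k : ℤ)] →
      monomialMinimalSize (k * m) ((l * m - 2 : ℤ) : ZMod (k * m)) = 6 * m) := by
  have hm' : 2 < m := by
    obtain ⟨j, rfl⟩ := hmo
    omega
  have h6m : Nat.Coprime 6 m :=
    Nat.Coprime.mul_left (Nat.prime_two.coprime_iff_not_dvd.2 hmo.not_two_dvd_nat)
      (Nat.prime_three.coprime_iff_not_dvd.2 hm3)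
  refine ⟨fun h => monomialMinimalSize_mul_add_two hk hm' h6m (dvd_mul_add_one_of_modEq h2 h),
    fun h => ?_⟩
  have hneg : ((l * m - 2 : ℤ) : ZMod (k * m)) = -((-l * m + 2 : ℤ) : ZMod (k * m)) := by
    push_cast
    ring
  rw [hneg, monomialMinimalSize_neg]
  exact monomialMinimalSize_mul_add_two hk hm' h6m
    (dvd_mul_add_one_of_modEq (by rwa [neg_sq]) (by rwa [neg_neg]))

end Monomial
end

section
/- Let k ≥ 2 and m ≥ 2 be integers, let N = k·m, and let l be an integer with l² ≡ 1 (mod k). Then for every natural number n, writing n = 24q + r with q a natural number and 0 ≤ r ≤ 23, one has in ℤ/Nℤ: (i) if m ≡ −l (mod k), then K_n(lm+2) = K_r(lm+2) + 24q(lm+1); (ii) if m ≡ l (mod k), then K_n(lm−2) = K_r(lm−2) + (−1)^{n+1}·24q(lm−1) (all quantities reduced mod N). -/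
namespace Monomial

private def B : ℕ → ℤ
  | 0 => 0
  | 1 => 1
  | n + 2 => B (n+1) - B n + (n + 2)

private lemma B_rec (n : ℕ) : B (n + 2) = B (n+1) - B n + (n + 2) := by rw [B]

private lemma K_rec {N : ℕ} (x : ZMod N) (n : ℕ) :
    K x (n + 2) = x * K x (n + 1) - K x n := by rw [K]

private lemma B_add_six : ∀ n, B (n + 6) = B n + 6 := by
  intro n
  induction n using Nat.strong_induction_on with
  | _ n ih =>
    match n with
    | 0 => norm_num [B]
    | 1 => norm_num [B]
    | n + 2 =>
      have h1 := ih (n+1) (by omega)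
      have h0 := ih n (by omega)
      have e : n + 2 + 6 = (n + 6) + 2 := by omega
      rw [e, B_rec, h1, h0, B_rec]
      push_cast
      ring

private lemma B_add_mul (q : ℕ) : ∀ n, B (n + 24 * q) = B n + 24 * q := by
  induction q with
  | zero => simp
  | succ q ih =>
    intro n
    have e : n + 24 * (q+1) = ((((n + 24*q) + 6) + 6) + 6) + 6 := by omega
    rw [e, B_add_six, B_add_six, B_add_six, B_add_six, ih]
    push_cast; ring

private lemma K_form {N : ℕ} (t : ZMod N) (ht : t * t = -t) :
    ∀ n, K (t + 2) n = (n : ZMod N) + 1 + ((B n : ℤ) : ZMod N) * t := by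
  intro n
  induction n using Nat.strong_induction_on with
  | _ n ih =>
    match n with
    | 0 => norm_num [K, B]
    | 1 => norm_num [K, B]; ring
    | n + 2 =>
      rw [K_rec, ih (n+1) (by omega), ih n (by omega), B_rec]
      push_cast
      linear_combination ((B (n+1) : ZMod N)) * ht

private lemma K_neg {N : ℕ} (x : ZMod N) : ∀ n, K (-x) n = (-1)^n * K x n := by
  intro n
  induction n using Nat.strong_induction_on with
  | _ n ih =>
    match n with
    | 0 => norm_num [K]
    | 1 => norm_num [K]
    | n + 2 =>
      rw [K_rec, K_rec, ih (n+1) (by omega), ih n (by omega)]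
      ring

theorem stmt16 (k m : ℕ) (hk : 2 ≤ k) (hm : 2 ≤ m) (l : ℤ)
    (h2 : l ^ 2 ≡ 1 [ZMOD (k : ℤ)]) :
    ∀ n q r : ℕ, r ≤ 23 → n = 24 * q + r →
      ((m : ℤ) ≡ -l [ZMOD (k : ℤ)] →
        K ((l * m + 2 : ℤ) : ZMod (k * m)) n =
          K ((l * m + 2 : ℤ) : ZMod (k * m)) r +
            ((24 * q * (l * m + 1) : ℤ) : ZMod (k * m))) ∧
      ((m : ℤ) ≡ l [ZMOD (k : ℤ)] →
        K ((l * m - 2 : ℤ) : ZMod (k * m)) n =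
          K ((l * m - 2 : ℤ) : ZMod (k * m)) r +
            (((-1 : ℤ) ^ (n + 1) * (24 * q * (l * m - 1)) : ℤ) : ZMod (k * m))) := by
  intro n q r hr hn
  subst hn
  have hnr : 24 * q + r = r + 24 * q := by omega
  constructor
  · intro hml
    have hdvd : ((k : ℤ)) ∣ (l * m + 1) := by
      have h1 : (l * m : ℤ) ≡ l * (-l) [ZMOD (k:ℤ)] := Int.ModEq.mul_left l hml
      have h2' : (l * (-l) : ℤ) ≡ -1 [ZMOD (k:ℤ)] := by
        calc (l * (-l) : ℤ) = -l^2 := by ring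
        _ ≡ -1 [ZMOD (k:ℤ)] := h2.neg
      have h3 : (l * m + 1 : ℤ) ≡ 0 [ZMOD (k:ℤ)] := by
        simpa using (h1.trans h2').add_right 1
      simpa using (Int.ModEq.dvd h3.symm)
    have hN : ((k * m : ℕ) : ℤ) ∣ l * m * (l * m + 1) := by
      obtain ⟨c, hc⟩ := hdvd
      exact ⟨l * c, by push_cast; rw [hc]; ring⟩
    have h0 : ((l * m * (l * m + 1) : ℤ) : ZMod (k*m)) = 0 :=
      (ZMod.intCast_zmod_eq_zero_iff_dvd _ _).mpr hN
    have ht : ((l * m : ℤ) : ZMod (k*m)) * ((l * m : ℤ) : ZMod (k*m)) =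
        -((l * m : ℤ) : ZMod (k*m)) := by
      push_cast at h0 ⊢
      linear_combination h0
    have hx : ((l * m + 2 : ℤ) : ZMod (k*m)) = ((l * m : ℤ) : ZMod (k*m)) + 2 := by
      push_cast; ring
    rw [hx, K_form _ ht, K_form _ ht, hnr, B_add_mul]
    push_cast
    ring
  · intro hml
    have hdvd : ((k : ℤ)) ∣ (l * m - 1) := by
      have h1 : (l * m : ℤ) ≡ l * l [ZMOD (k:ℤ)] := Int.ModEq.mul_left l hml
      have h2' : (l * l : ℤ) ≡ 1 [ZMOD (k:ℤ)] := by
        calc (l * l : ℤ) = l^2 := by ring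
        _ ≡ 1 [ZMOD (k:ℤ)] := h2
      have h3 : (l * m - 1 : ℤ) ≡ 0 [ZMOD (k:ℤ)] := by
        simpa using (h1.trans h2').sub_right 1
      simpa using (Int.ModEq.dvd h3.symm)
    have hN : ((k * m : ℕ) : ℤ) ∣ l * m * (l * m - 1) := by
      obtain ⟨c, hc⟩ := hdvd
      exact ⟨l * c, by push_cast; rw [hc]; ring⟩
    have h0 : ((l * m * (l * m - 1) : ℤ) : ZMod (k*m)) = 0 :=
      (ZMod.intCast_zmod_eq_zero_iff_dvd _ _).mpr hN
    have hs : (-((l * m : ℤ) : ZMod (k*m))) * (-((l * m : ℤ) : ZMod (k*m))) =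
        -(-((l * m : ℤ) : ZMod (k*m))) := by
      push_cast at h0 ⊢
      linear_combination h0
    have hx : ((l * m - 2 : ℤ) : ZMod (k*m)) =
        -((-((l * m : ℤ) : ZMod (k*m))) + 2) := by
      push_cast; ring
    rw [hx, K_neg, K_neg, K_form _ hs, K_form _ hs, hnr, B_add_mul]
    have hp : ((-1 : ZMod (k*m)))^(r + 24 * q) = (-1)^r := by
      rw [pow_add, pow_mul]; norm_num
    have hp2 : ((-1 : ℤ))^(r + 24 * q + 1) = -(-1)^r := by
      rw [pow_succ, pow_add, pow_mul]; norm_num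
    rw [hp, hp2]
    push_cast
    ring

end Monomial
end
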